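/- Let A ∈ ℂ^{n×n} be Hermitian, L ∈ ℂ^{n×n} with Re L negative semidefinite and ker(Re L) = ker L. Suppose for every λ ∈ ℂ one has ker(λI - A) ∩ ker L = {0}. Then for every eigenvalue λ of A and every matrix J_R ∈ ℂ^{n×α} whose columns form an orthonormal basis of ker(A - λI), the Hermitian matrix J_R* (Re L) J_R is negative definite. -/

import Mathlib

open scoped ComplexOrder Matrix

namespace Matrix

lemma mulVec_injective_of_mul_eq_one {m n R : Type*} [Fintype m] [Fintype n] [DecidableEq n]
    [CommSemiring R] {B : Matrix m n R} {C : Matrix n m R} (h : C * B = 1) :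
    Function.Injective B.mulVec :=
  Function.LeftInverse.injective (g := C.mulVec) fun w => by
    rw [mulVec_mulVec, h, one_mulVec]

/-- The form of a positive semidefinite `M` vanishes only on `ker M`. -/
lemma PosSemidef.posDef_conjTranspose_mul_mul {𝕜 m n : Type*} [RCLike 𝕜] [Fintype m]
    [Fintype n] {M : Matrix n n 𝕜} (hM : M.PosSemidef) {B : Matrix n m 𝕜}
    (hB : Function.Injective B.mulVec) (hker : ∀ w, M *ᵥ (B *ᵥ w) = 0 → B *ᵥ w = 0) :
    (Bᴴ * M * B).PosDef := by
  refine PosDef.of_dotProduct_mulVec_pos (hM.conjTranspose_mul_mul_same B).1 fun w hw => ?_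
  have hBw : B *ᵥ w ≠ 0 := fun h => hw (hB.eq_iff' (mulVec_zero B) |>.1 h)
  have hform : star w ⬝ᵥ (Bᴴ * M * B) *ᵥ w = star (B *ᵥ w) ⬝ᵥ M *ᵥ (B *ᵥ w) := by
    simp only [star_mulVec, dotProduct_mulVec, vecMul_vecMul]
  rw [hform]
  refine (hM.dotProduct_mulVec_nonneg _).lt_of_ne fun h => hBw (hker w ?_)
  exact (hM.dotProduct_mulVec_zero_iff _).1 h.symm

end Matrix

theorem shizuta_kawashima_implies_projected_dissipativity_general
    (n α : ℕ) (A L : Matrix (Fin n) (Fin n) ℂ)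
    (hReL : (-((1/2 : ℂ) • (L + Lᴴ))).PosSemidef)
    (hker : ∀ x : Fin n → ℂ, ((1/2 : ℂ) • (L + Lᴴ)).mulVec x = 0 ↔ L.mulVec x = 0)
    (hK : ∀ (μ : ℂ) (x : Fin n → ℂ), A.mulVec x = μ • x → L.mulVec x = 0 → x = 0)
    (lam : ℂ)
    (JR : Matrix (Fin n) (Fin α) ℂ)
    (hortho : JRᴴ * JR = 1)
    (hJR_eig : ∀ w : Fin α → ℂ, A.mulVec (JR.mulVec w) = lam • JR.mulVec w) :
    (-(JRᴴ * ((1/2 : ℂ) • (L + Lᴴ)) * JR)).PosDef := by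
  rw [← Matrix.neg_mul, ← Matrix.mul_neg]
  refine hReL.posDef_conjTranspose_mul_mul (Matrix.mulVec_injective_of_mul_eq_one hortho)
    fun w hw => hK lam _ (hJR_eig w) ((hker _).1 ?_)
  rwa [Matrix.neg_mulVec, neg_eq_zero] at hw

theorem shizuta_kawashima_implies_projected_dissipativity
    (n α : ℕ) (A L : Matrix (Fin n) (Fin n) ℂ) (hA : A.IsHermitian)
    (hReL : (-((1/2 : ℂ) • (L + Lᴴ))).PosSemidef)
    (hker : ∀ x : Fin n → ℂ, ((1/2 : ℂ) • (L + Lᴴ)).mulVec x = 0 ↔ L.mulVec x = 0)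
    (hK : ∀ (μ : ℂ) (x : Fin n → ℂ), A.mulVec x = μ • x → L.mulVec x = 0 → x = 0)
    (lam : ℂ) (hlam : ∃ v : Fin n → ℂ, v ≠ 0 ∧ A.mulVec v = lam • v)
    (JR : Matrix (Fin n) (Fin α) ℂ)
    (hortho : JRᴴ * JR = 1)
    (hJR_eig : ∀ w : Fin α → ℂ, A.mulVec (JR.mulVec w) = lam • JR.mulVec w)
    (hJR_span : ∀ x : Fin n → ℂ, A.mulVec x = lam • x → ∃ w, x = JR.mulVec w) :
    (-(JRᴴ * ((1/2 : ℂ) • (L + Lᴴ)) * JR)).PosDef :=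
  shizuta_kawashima_implies_projected_dissipativity_general n α A L hReL hker hK lam JR hortho
    hJR_eig
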